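/- arXiv:2403.08658 — 3 statements merged into one kernel-verified Lean document; each statement's English description precedes it below -/
import Mathlib

section
/- Let L : ℝ^n → ℝ be continuous with compact sublevel sets, and let R : ℝ^n → Set(ℝ^n) be a set-valued map with closed graph such that x ∈ R(x) for all x in a closed set X, with R(x) ⊆ X. Let (x^i) satisfy x^{i+1} ∈ argmin{ L(u) : u ∈ R(x^i) } with the argmin nonempty. If a subsequence (x^i)_{i∈I} converges to x̄ and the value function m(x) = min{L(u) : u ∈ R(x)} is upper semicontinuous, then L(x̄) = m(x̄) and x̄ ∈ argmin{ L(u) : u ∈ R(x̄) }, i.e., x̄ is a fixed point of the map F(x) = argmin{L(u) : u ∈ R(x)}. -/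
/-!
Since each iterate is feasible for its own local problem, `L (x i)` is nonincreasing, so the
convergence of `L` along the subsequence forces the whole sequence `L (x i)` to converge to
`L x̄`. The optimal values `m (x (φ i)) = L (x (φ i + 1))` therefore also tend to `L x̄`, and upper
semicontinuity of `m` gives `L x̄ ≤ m x̄`. As `X` is closed, `x̄ ∈ X`, so `x̄` is feasible for its
own problem, which gives the reverse inequality.
-/

open Filter Topology

section ArgminIteration

variable {α : Type*} {L : α → ℝ} {R : α → Set α} {X : Set α} {x : ℕ → α}

theorem iterate_mem_of_forall_subset (hRX : ∀ y, R y ⊆ X) (hx0 : x 0 ∈ X)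
    (hfeas : ∀ i, x (i + 1) ∈ R (x i)) : ∀ i, x i ∈ X
  | 0 => hx0
  | i + 1 => hRX _ (hfeas i)

theorem antitone_comp_of_argmin_step (hself : ∀ i, x i ∈ R (x i))
    (hmin : ∀ i, ∀ u ∈ R (x i), L (x (i + 1)) ≤ L u) : Antitone (L ∘ x) :=
  antitone_nat_of_succ_le fun i => hmin i _ (hself i)

theorem apply_argmin_eq_minValue {S : Set α} {v : α} {c : ℝ}
    (hv : v ∈ S) (hvmin : ∀ u ∈ S, L v ≤ L u) (hc : (∃ u ∈ S, L u = c) ∧ ∀ u ∈ S, c ≤ L u) :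
    L v = c := by
  obtain ⟨⟨u, hu, rfl⟩, hcle⟩ := hc
  exact le_antisymm (hvmin u hu) (hcle v hv)

end ArgminIteration

theorem stmt_2_general {n : ℕ}
    (L : (Fin n → ℝ) → ℝ) (hL : Continuous L)
    (X : Set (Fin n → ℝ)) (hX : IsClosed X)
    (R : (Fin n → ℝ) → Set (Fin n → ℝ))
    (hself : ∀ x ∈ X, x ∈ R x)
    (hRX : ∀ x, R x ⊆ X)
    (m : (Fin n → ℝ) → ℝ)
    (hm : ∀ x, (∃ u ∈ R x, L u = m x) ∧ ∀ u ∈ R x, m x ≤ L u)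
    (husc : ∀ (xs : ℕ → (Fin n → ℝ)) (xbar : Fin n → ℝ) (mbar : ℝ),
      Tendsto xs atTop (𝓝 xbar) →
      Tendsto (fun i => m (xs i)) atTop (𝓝 mbar) → mbar ≤ m xbar)
    (x : ℕ → Fin n → ℝ) (hx0 : x 0 ∈ X)
    (hstep : ∀ i, x (i + 1) ∈ R (x i) ∧ ∀ u ∈ R (x i), L (x (i + 1)) ≤ L u)
    (φ : ℕ → ℕ) (hφ : StrictMono φ) (xbar : Fin n → ℝ)
    (hconv : Tendsto (fun i => x (φ i)) atTop (𝓝 xbar)) :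
    L xbar = m xbar ∧ xbar ∈ R xbar ∧ ∀ u ∈ R xbar, L xbar ≤ L u := by
  have hxX := iterate_mem_of_forall_subset hRX hx0 fun i => (hstep i).1
  have hanti : Antitone (L ∘ x) :=
    antitone_comp_of_argmin_step (fun i => hself _ (hxX i)) fun i => (hstep i).2
  have hLx : Tendsto (L ∘ x) atTop (𝓝 (L xbar)) :=
    (tendsto_iff_tendsto_subseq_of_antitone hanti hφ.tendsto_atTop).2
      ((hL.tendsto xbar).comp hconv)
  have hval : ∀ i, L (x (i + 1)) = m (x i) := fun i =>
    apply_argmin_eq_minValue (hstep i).1 (hstep i).2 (hm (x i))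
  have hmx : Tendsto (fun i => m (x (φ i))) atTop (𝓝 (L xbar)) := by
    simpa only [Function.comp_def, hval] using
      hLx.comp ((tendsto_add_atTop_nat 1).comp hφ.tendsto_atTop)
  have hxbarR : xbar ∈ R xbar :=
    hself _ (hX.mem_of_tendsto hconv (Eventually.of_forall fun i => hxX (φ i)))
  have hLm : L xbar = m xbar :=
    le_antisymm (husc _ xbar _ hconv hmx) ((hm xbar).2 _ hxbarR)
  exact ⟨hLm, hxbarR, hLm ▸ (hm xbar).2⟩

/-- accumulation points of the NS-DASF iterates are fixed points of
the local argmin map. -/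
theorem stmt_2 {n : ℕ}
    (L : (Fin n → ℝ) → ℝ) (hL : Continuous L)
    (hsub : ∀ c : ℝ, IsCompact {x : Fin n → ℝ | L x ≤ c})
    (X : Set (Fin n → ℝ)) (hX : IsClosed X)
    (R : (Fin n → ℝ) → Set (Fin n → ℝ))
    (hgraph : IsClosed {p : (Fin n → ℝ) × (Fin n → ℝ) | p.2 ∈ R p.1})
    (hself : ∀ x ∈ X, x ∈ R x)
    (hRX : ∀ x, R x ⊆ X)
    (m : (Fin n → ℝ) → ℝ)
    (hm : ∀ x, (∃ u ∈ R x, L u = m x) ∧ ∀ u ∈ R x, m x ≤ L u)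
    (husc : ∀ (xs : ℕ → (Fin n → ℝ)) (xbar : Fin n → ℝ) (mbar : ℝ),
      Tendsto xs atTop (𝓝 xbar) →
      Tendsto (fun i => m (xs i)) atTop (𝓝 mbar) → mbar ≤ m xbar)
    (x : ℕ → Fin n → ℝ) (hx0 : x 0 ∈ X)
    (hstep : ∀ i, x (i + 1) ∈ R (x i) ∧ ∀ u ∈ R (x i), L (x (i + 1)) ≤ L u)
    (φ : ℕ → ℕ) (hφ : StrictMono φ) (xbar : Fin n → ℝ)
    (hconv : Tendsto (fun i => x (φ i)) atTop (𝓝 xbar)) :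
    L xbar = m xbar ∧ xbar ∈ R xbar ∧ ∀ u ∈ R xbar, L xbar ≤ L u :=
  stmt_2_general L hL X hX R hself hRX m hm husc x hx0 hstep φ hφ xbar hconv
end

section
/- Let f : ℝ^n → ℝ be differentiable, g = Σ_k g_k convex and block-separable over a block decomposition x = (x_1,…,x_K), and X = X_1 × ⋯ × X_K convex and block-separable. Suppose a point x° satisfies, for every block index k, the inclusion 0 ∈ ∇f(x°) + ∂g(x°) + N_X(x°) + V_k, where V_k is a product cone whose k-th block is {0}. Then 0 ∈ ∇f(x°) + ∂g(x°) + N_X(x°), i.e., x° is a stationary point of min_{x∈X} f(x) + g(x). -/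
open scoped RealInnerProductSpace Pointwise

def subdiff {E : Type*} [NormedAddCommGroup E] [InnerProductSpace ℝ E]
    (g : E → ℝ) (x : E) : Set E :=
  {v | ∀ y, g x + ⟪v, y - x⟫ ≤ g y}

def normalCone {E : Type*} [NormedAddCommGroup E] [InnerProductSpace ℝ E]
    (C : Set E) (x : E) : Set E :=
  {v | ∀ y ∈ C, ⟪v, y - x⟫ ≤ 0}

/-!
A block-separable problem has a product-shaped stationarity set: the subdifferential of
`∑ i, g i (y i)` and the normal cone of `∏ i, X i` are the products of the blockwise ones, as one
sees by testing against points that differ from `x` in a single block. Hence the stationarity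
inclusion at `x` is the conjunction of its blockwise versions. The `k`-th perturbed inclusion
has a zero `k`-th block in its extra cone, so it yields exactly the `k`-th blockwise inclusion.
-/

theorem Set.mem_singleton_add_add_iff {α : Type*} [AddSemigroup α] {a w : α} {s t : Set α} :
    w ∈ {a} + s + t ↔ ∃ b ∈ s, ∃ c ∈ t, a + b + c = w := by
  simp [Set.mem_add]

theorem PiLp.inner_single_right {𝕜 ι : Type*} [RCLike 𝕜] [Fintype ι] [DecidableEq ι]
    {E : ι → Type*} [∀ i, NormedAddCommGroup (E i)] [∀ i, InnerProductSpace 𝕜 (E i)]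
    (v : PiLp 2 E) (i : ι) (a : E i) : inner 𝕜 v (single 2 i a) = inner 𝕜 (v i) a := by
  rw [PiLp.inner_apply, Finset.sum_eq_single i (fun j _ hj => by simp [hj]) (by simp)]
  simp

section BlockSeparable

variable {ι : Type*} [Fintype ι] {E : ι → Type*}
  [∀ i, NormedAddCommGroup (E i)] [∀ i, InnerProductSpace ℝ (E i)]
  {g : ∀ i, E i → ℝ} {X : ∀ i, Set (E i)} {x v : PiLp 2 E}

theorem mem_subdiff_sum_iff :
    v ∈ subdiff (fun y : PiLp 2 E => ∑ i, g i (y i)) x ↔ ∀ i, v i ∈ subdiff (g i) (x i) := by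
  classical
  constructor
  · intro hv i z
    have key := hv (x + PiLp.single 2 i (z - x i))
    have hsum : ∑ j, g j ((x + PiLp.single 2 i (z - x i)) j) - ∑ j, g j (x j) =
        g i z - g i (x i) := by
      rw [← Finset.sum_sub_distrib, Finset.sum_eq_single i (fun j _ hj => by simp [hj]) (by simp)]
      simp
    rw [add_sub_cancel_left, PiLp.inner_single_right] at key
    linarith
  · intro hv y
    simp only [PiLp.inner_apply, PiLp.sub_apply, ← Finset.sum_add_distrib]
    exact Finset.sum_le_sum fun i _ => hv i (y i)

theorem mem_normalCone_pi_iff (hx : ∀ i, x i ∈ X i) :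
    v ∈ normalCone {y : PiLp 2 E | ∀ i, y i ∈ X i} x ↔ ∀ i, v i ∈ normalCone (X i) (x i) := by
  classical
  constructor
  · intro hv i z hz
    have hmem : ∀ j, (x + PiLp.single 2 i (z - x i)) j ∈ X j := fun j => by
      rcases eq_or_ne j i with rfl | hj
      · simpa using hz
      · simpa [hj] using hx j
    simpa [PiLp.inner_single_right] using hv _ hmem
  · intro hv y hy
    simp only [PiLp.inner_apply, PiLp.sub_apply]
    exact Finset.sum_nonpos fun i _ => hv i (y i) (hy i)

theorem mem_singleton_add_subdiff_add_normalCone_iff (hx : ∀ i, x i ∈ X i) {a w : PiLp 2 E} :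
    w ∈ {a} + subdiff (fun y : PiLp 2 E => ∑ i, g i (y i)) x +
        normalCone {y : PiLp 2 E | ∀ i, y i ∈ X i} x ↔
      ∀ i, w i ∈ {a i} + subdiff (g i) (x i) + normalCone (X i) (x i) := by
  simp only [Set.mem_singleton_add_add_iff, mem_subdiff_sum_iff, mem_normalCone_pi_iff hx]
  constructor
  · rintro ⟨s, hs, n, hn, rfl⟩ i
    exact ⟨s i, hs i, n i, hn i, rfl⟩
  · intro h
    choose s hs n hn hw using h
    exact ⟨WithLp.toLp 2 s, hs, WithLp.toLp 2 n, hn, PiLp.ext hw⟩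

end BlockSeparable

theorem stmt_9_general {K Q : ℕ} (M : Fin K → ℕ)
    (f : PiLp 2 (fun k : Fin K => EuclideanSpace ℝ (Fin (M k) × Fin Q)) → ℝ)
    (X : ∀ k : Fin K, Set (EuclideanSpace ℝ (Fin (M k) × Fin Q)))
    (g : ∀ k : Fin K, EuclideanSpace ℝ (Fin (M k) × Fin Q) → ℝ)
    (W : ∀ k k' : Fin K, Set (EuclideanSpace ℝ (Fin (M k') × Fin Q)))
    (hWk : ∀ k, W k k = {0})
    (x₀ : PiLp 2 (fun k : Fin K => EuclideanSpace ℝ (Fin (M k) × Fin Q)))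
    (hx₀ : ∀ k, x₀ k ∈ X k)
    (hincl : ∀ k : Fin K,
      (0 : PiLp 2 (fun k : Fin K => EuclideanSpace ℝ (Fin (M k) × Fin Q))) ∈
        ({gradient f x₀} : Set (PiLp 2 (fun k : Fin K => EuclideanSpace ℝ (Fin (M k) × Fin Q))))
        + subdiff (fun y => ∑ k', g k' (y k')) x₀
        + normalCone {y : PiLp 2 (fun k : Fin K => EuclideanSpace ℝ (Fin (M k) × Fin Q)) |
            ∀ k', y k' ∈ X k'} x₀
        + {v : PiLp 2 (fun k : Fin K => EuclideanSpace ℝ (Fin (M k) × Fin Q)) |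
            ∀ k', v k' ∈ W k k'}) :
    (0 : PiLp 2 (fun k : Fin K => EuclideanSpace ℝ (Fin (M k) × Fin Q))) ∈
      ({gradient f x₀} : Set (PiLp 2 (fun k : Fin K => EuclideanSpace ℝ (Fin (M k) × Fin Q))))
      + subdiff (fun y => ∑ k', g k' (y k')) x₀
      + normalCone {y : PiLp 2 (fun k : Fin K => EuclideanSpace ℝ (Fin (M k) × Fin Q)) |
          ∀ k', y k' ∈ X k'} x₀ := by
  rw [mem_singleton_add_subdiff_add_normalCone_iff hx₀]
  intro k
  obtain ⟨t, ht, v, hv, htv⟩ := Set.mem_add.mp (hincl k)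
  have hvk : v k = 0 := by simpa [hWk k] using hv k
  have htk : t k = 0 := by simpa [hvk] using congrArg (· k) htv
  simpa [htk] using (mem_singleton_add_subdiff_add_normalCone_iff hx₀).mp ht k

/-- if the per-node stationarity inclusions
`0 ∈ ∇f(x°) + ∂g(x°) + N_X(x°) + V_k` hold for every block `k`, where `V_k` is a
product cone with zero `k`-th block, and `g` and `X` are block-separable, then
`x°` is a stationary point: `0 ∈ ∇f(x°) + ∂g(x°) + N_X(x°)`. -/
theorem stmt_9 {K Q : ℕ} (M : Fin K → ℕ)
    (f : PiLp 2 (fun k : Fin K => EuclideanSpace ℝ (Fin (M k) × Fin Q)) → ℝ)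
    (hf : Differentiable ℝ f)
    (X : ∀ k : Fin K, Set (EuclideanSpace ℝ (Fin (M k) × Fin Q)))
    (hXconv : ∀ k, Convex ℝ (X k))
    (g : ∀ k : Fin K, EuclideanSpace ℝ (Fin (M k) × Fin Q) → ℝ)
    (hg : ∀ k, ConvexOn ℝ Set.univ (g k))
    (W : ∀ k k' : Fin K, Set (EuclideanSpace ℝ (Fin (M k') × Fin Q)))
    (hWcone : ∀ k k', ∀ (c : ℝ), 0 ≤ c → ∀ v ∈ W k k', c • v ∈ W k k')
    (hWk : ∀ k, W k k = {0})
    (x₀ : PiLp 2 (fun k : Fin K => EuclideanSpace ℝ (Fin (M k) × Fin Q)))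
    (hx₀ : ∀ k, x₀ k ∈ X k)
    (hincl : ∀ k : Fin K,
      (0 : PiLp 2 (fun k : Fin K => EuclideanSpace ℝ (Fin (M k) × Fin Q))) ∈
        ({gradient f x₀} : Set (PiLp 2 (fun k : Fin K => EuclideanSpace ℝ (Fin (M k) × Fin Q))))
        + subdiff (fun y => ∑ k', g k' (y k')) x₀
        + normalCone {y : PiLp 2 (fun k : Fin K => EuclideanSpace ℝ (Fin (M k) × Fin Q)) |
            ∀ k', y k' ∈ X k'} x₀
        + {v : PiLp 2 (fun k : Fin K => EuclideanSpace ℝ (Fin (M k) × Fin Q)) |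
            ∀ k', v k' ∈ W k k'}) :
    (0 : PiLp 2 (fun k : Fin K => EuclideanSpace ℝ (Fin (M k) × Fin Q))) ∈
      ({gradient f x₀} : Set (PiLp 2 (fun k : Fin K => EuclideanSpace ℝ (Fin (M k) × Fin Q))))
      + subdiff (fun y => ∑ k', g k' (y k')) x₀
      + normalCone {y : PiLp 2 (fun k : Fin K => EuclideanSpace ℝ (Fin (M k) × Fin Q)) |
          ∀ k', y k' ∈ X k'} x₀ :=
  stmt_9_general M f X g W hWk x₀ hx₀ hincl
end

section
/- Let F : X → Set(X) be a set-valued map on a compact set X ⊆ ℝ^n such that: (i) every selection x^{i+1} ∈ F(x^i) satisfies L(x^{i+1}) ≤ L(x^i) for a continuous L; (ii) every accumulation point x̄ of a sequence generated by x^{i+1} ∈ F(x^i) satisfies x̄ ∈ F(x̄). Then for any such sequence, L(x^i) converges and lim L(x^i) = L(x̄) = min{ L(u) : u ∈ F(x̄) } for every accumulation point x̄, provided F(x̄) is defined as the argmin of L over a set containing x̄. -/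
/-!
Along the iteration, `L (x i)` is antitone, so it converges as soon as it converges along one
subsequence; by continuity of `L` it does so to `L xbar` along any subsequence with `x (φ i) → xbar`,
and compactness of `X` supplies one. An accumulation point `xbar` lies in the closed set `X`, so
`F xbar` is the argmin of `L` over `G xbar`, and `xbar ∈ F xbar` makes `L xbar` its least value.
-/

open Filter Topology Set

theorem forall_mem_of_step_mem {α : Type*} {X : Set α} {F : α → Set α}
    (hFX : ∀ y ∈ X, F y ⊆ X) {x : ℕ → α} (hx0 : x 0 ∈ X) (hstep : ∀ i, x (i + 1) ∈ F (x i)) :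
    ∀ i, x i ∈ X
  | 0 => hx0
  | i + 1 => hFX (x i) (forall_mem_of_step_mem hFX hx0 hstep i) (hstep i)

theorem tendsto_comp_of_antitone_of_tendsto_subseq {E : Type*} [TopologicalSpace E]
    {L : E → ℝ} (hL : Continuous L) {x : ℕ → E} (hanti : Antitone (L ∘ x))
    {φ : ℕ → ℕ} (hφ : StrictMono φ) {a : E} (hxφ : Tendsto (x ∘ φ) atTop (𝓝 a)) :
    Tendsto (L ∘ x) atTop (𝓝 (L a)) :=
  (tendsto_iff_tendsto_subseq_of_antitone hanti hφ.tendsto_atTop).2 ((hL.tendsto a).comp hxφ)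

theorem isLeast_image_argmin {α β : Type*} [Preorder β] {S : Set α} {f : α → β} {a : α}
    (ha : a ∈ {u ∈ S | ∀ v ∈ S, f u ≤ f v}) :
    IsLeast (f '' {u ∈ S | ∀ v ∈ S, f u ≤ f v}) (f a) := by
  refine ⟨mem_image_of_mem f ha, ?_⟩
  rintro _ ⟨u, hu, rfl⟩
  exact ha.2 u hu.1

/-- abstract fixed-point convergence statement combining monotone
descent with the fixed-point property of accumulation points. -/
theorem stmt_19 {n : ℕ}
    (X : Set (Fin n → ℝ)) (hXcpt : IsCompact X)
    (L : (Fin n → ℝ) → ℝ) (hL : Continuous L)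
    (F : (Fin n → ℝ) → Set (Fin n → ℝ))
    (hFX : ∀ y ∈ X, F y ⊆ X)
    -- F(x) is the argmin of L over a set G(x) containing x
    (G : (Fin n → ℝ) → Set (Fin n → ℝ))
    (hG : ∀ y ∈ X, y ∈ G y ∧ F y = {u ∈ G y | ∀ v ∈ G y, L u ≤ L v})
    (x : ℕ → Fin n → ℝ) (hx0 : x 0 ∈ X)
    (hstep : ∀ i, x (i + 1) ∈ F (x i))
    -- (i) monotone descent along the sequence
    (hdesc : ∀ i, L (x (i + 1)) ≤ L (x i))
    -- (ii) accumulation points are fixed points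
    (hfix : ∀ xbar : Fin n → ℝ,
      (∃ φ : ℕ → ℕ, StrictMono φ ∧ Tendsto (fun i => x (φ i)) atTop (𝓝 xbar)) →
      xbar ∈ F xbar) :
    (∃ l : ℝ, Tendsto (fun i => L (x i)) atTop (𝓝 l)) ∧
    (∀ xbar : Fin n → ℝ,
      (∃ φ : ℕ → ℕ, StrictMono φ ∧ Tendsto (fun i => x (φ i)) atTop (𝓝 xbar)) →
      Tendsto (fun i => L (x i)) atTop (𝓝 (L xbar)) ∧
      L xbar ∈ lowerBounds (L '' F xbar) ∧ L xbar ∈ L '' F xbar) := by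
  have hxX : ∀ i, x i ∈ X := forall_mem_of_step_mem hFX hx0 hstep
  have hanti : Antitone (L ∘ x) := antitone_nat_of_succ_le hdesc
  obtain ⟨x₀, -, φ₀, hφ₀, hxφ₀⟩ := hXcpt.tendsto_subseq hxX
  refine ⟨⟨L x₀, tendsto_comp_of_antitone_of_tendsto_subseq hL hanti hφ₀ hxφ₀⟩,
    fun xbar hacc => ?_⟩
  obtain ⟨φ, hφ, hxφ⟩ := hacc
  have hxbarX : xbar ∈ X :=
    hXcpt.isClosed.mem_of_tendsto hxφ (Eventually.of_forall fun i => hxX (φ i))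
  have hleast : IsLeast (L '' F xbar) (L xbar) := by
    have hargmin := hfix xbar ⟨φ, hφ, hxφ⟩
    rw [(hG xbar hxbarX).2] at hargmin ⊢
    exact isLeast_image_argmin hargmin
  exact ⟨tendsto_comp_of_antitone_of_tendsto_subseq hL hanti hφ hxφ, hleast.2, hleast.1⟩
end
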